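/- arXiv:2503.17483 — 5 statements merged into one kernel-verified Lean document; each statement's English description precedes it below -/
import Mathlib

section
/- Cartesian products preserve sharpness of hybrid zonotopes: if Z₁ and Z₂ are hybrid zonotopes with conv(Zᵢ) = R(Zᵢ) for i = 1,2, then the block-diagonal hybrid zonotope representation of Z₁ × Z₂ satisfies conv(Z₁ × Z₂) = R(Z₁ × Z₂). -/
open Matrix Set

/-- A hybrid zonotope with given generators, center and constraints. -/
def hybZono {ι γ β κ : Type*} [Fintype γ] [Fintype β]
    (Gc : Matrix ι γ ℝ) (Gb : Matrix ι β ℝ) (c : ι → ℝ)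
    (Ac : Matrix κ γ ℝ) (Ab : Matrix κ β ℝ) (b : κ → ℝ) : Set (ι → ℝ) :=
  {x | ∃ (ξc : γ → ℝ) (ξb : β → ℝ),
      (∀ i, ξc i ∈ Icc (-1 : ℝ) 1) ∧ (∀ i, ξb i = -1 ∨ ξb i = 1) ∧
      Ac.mulVec ξc + Ab.mulVec ξb = b ∧
      x = Gc.mulVec ξc + Gb.mulVec ξb + c}

/-- The convex relaxation of a hybrid zonotope representation. -/
def hybZonoRelax {ι γ β κ : Type*} [Fintype γ] [Fintype β]
    (Gc : Matrix ι γ ℝ) (Gb : Matrix ι β ℝ) (c : ι → ℝ)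
    (Ac : Matrix κ γ ℝ) (Ab : Matrix κ β ℝ) (b : κ → ℝ) : Set (ι → ℝ) :=
  {x | ∃ (ξc : γ → ℝ) (ξb : β → ℝ),
      (∀ i, ξc i ∈ Icc (-1 : ℝ) 1) ∧ (∀ i, ξb i ∈ Icc (-1 : ℝ) 1) ∧
      Ac.mulVec ξc + Ab.mulVec ξb = b ∧
      x = Gc.mulVec ξc + Gb.mulVec ξb + c}

/-- The "combine" linear map. -/
def elimLM (ι₁ ι₂ : Type*) : ((ι₁ → ℝ) × (ι₂ → ℝ)) →ₗ[ℝ] (ι₁ ⊕ ι₂ → ℝ) where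
  toFun p := Sum.elim p.1 p.2
  map_add' p q := by funext i; cases i <;> rfl
  map_smul' r p := by funext i; cases i <;> rfl

lemma blockMulVec {m₁ m₂ a b : Type*} [Fintype a] [Fintype b]
    (A : Matrix m₁ a ℝ) (D : Matrix m₂ b ℝ) (ξ : a ⊕ b → ℝ) :
    (Matrix.fromBlocks A 0 0 D).mulVec ξ =
      Sum.elim (A.mulVec (ξ ∘ Sum.inl)) (D.mulVec (ξ ∘ Sum.inr)) := by
  rw [Matrix.fromBlocks_mulVec]
  simp [Matrix.zero_mulVec]

lemma elim_add {ι₁ ι₂ : Type*} (f h : ι₁ → ℝ) (g k : ι₂ → ℝ) :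
    Sum.elim f g + Sum.elim h k = Sum.elim (f + h) (g + k) := by
  funext i; cases i <;> rfl

lemma block_rep {n₁ n₂ ng₁ ng₂ nb₁ nb₂ nc₁ nc₂ : ℕ} (P : ℝ → Prop)
    (Gc₁ : Matrix (Fin n₁) (Fin ng₁) ℝ) (Gb₁ : Matrix (Fin n₁) (Fin nb₁) ℝ)
    (c₁ : Fin n₁ → ℝ)
    (Ac₁ : Matrix (Fin nc₁) (Fin ng₁) ℝ) (Ab₁ : Matrix (Fin nc₁) (Fin nb₁) ℝ)
    (b₁ : Fin nc₁ → ℝ)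
    (Gc₂ : Matrix (Fin n₂) (Fin ng₂) ℝ) (Gb₂ : Matrix (Fin n₂) (Fin nb₂) ℝ)
    (c₂ : Fin n₂ → ℝ)
    (Ac₂ : Matrix (Fin nc₂) (Fin ng₂) ℝ) (Ab₂ : Matrix (Fin nc₂) (Fin nb₂) ℝ)
    (b₂ : Fin nc₂ → ℝ) :
    {x : Fin n₁ ⊕ Fin n₂ → ℝ | ∃ ξc ξb,
      (∀ i, ξc i ∈ Icc (-1 : ℝ) 1) ∧ (∀ i, P (ξb i)) ∧
      (Matrix.fromBlocks Ac₁ 0 0 Ac₂).mulVec ξc +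
        (Matrix.fromBlocks Ab₁ 0 0 Ab₂).mulVec ξb = Sum.elim b₁ b₂ ∧
      x = (Matrix.fromBlocks Gc₁ 0 0 Gc₂).mulVec ξc +
        (Matrix.fromBlocks Gb₁ 0 0 Gb₂).mulVec ξb + Sum.elim c₁ c₂} =
    (elimLM (Fin n₁) (Fin n₂)) ''
      (({x | ∃ ξc ξb, (∀ i, ξc i ∈ Icc (-1 : ℝ) 1) ∧ (∀ i, P (ξb i)) ∧
          Ac₁.mulVec ξc + Ab₁.mulVec ξb = b₁ ∧
          x = Gc₁.mulVec ξc + Gb₁.mulVec ξb + c₁}) ×ˢ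
       ({x | ∃ ξc ξb, (∀ i, ξc i ∈ Icc (-1 : ℝ) 1) ∧ (∀ i, P (ξb i)) ∧
          Ac₂.mulVec ξc + Ab₂.mulVec ξb = b₂ ∧
          x = Gc₂.mulVec ξc + Gb₂.mulVec ξb + c₂})) := by
  ext x
  simp only [mem_setOf_eq, mem_image, mem_prod, blockMulVec, elim_add]
  constructor
  · rintro ⟨ξc, ξb, hc, hb, hcon, rfl⟩
    exact ⟨(_, _), ⟨⟨ξc ∘ Sum.inl, ξb ∘ Sum.inl, fun i => hc _, fun i => hb _,
        funext fun j => congrFun hcon (Sum.inl j), rfl⟩,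
      ⟨ξc ∘ Sum.inr, ξb ∘ Sum.inr, fun i => hc _, fun i => hb _,
        funext fun j => congrFun hcon (Sum.inr j), rfl⟩⟩, rfl⟩
  · rintro ⟨⟨x₁, x₂⟩, ⟨⟨ξc₁, ξb₁, hc₁, hb₁, hcon₁, rfl⟩,
      ⟨ξc₂, ξb₂, hc₂, hb₂, hcon₂, rfl⟩⟩, rfl⟩
    exact ⟨Sum.elim ξc₁ ξc₂, Sum.elim ξb₁ ξb₂,
      fun i => by cases i <;> [exact hc₁ _; exact hc₂ _],
      fun i => by cases i <;> [exact hb₁ _; exact hb₂ _],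
      by simp only [Sum.elim_comp_inl, Sum.elim_comp_inr, hcon₁, hcon₂],
      by simp only [Sum.elim_comp_inl, Sum.elim_comp_inr]; rfl⟩

/-- Cartesian products preserve sharpness of hybrid zonotopes: the
block-diagonal hybrid zonotope representation of `Z₁ × Z₂` is sharp whenever
`Z₁` and `Z₂` are. -/
theorem cartesianProduct_preserves_sharpness
    (n₁ n₂ ng₁ ng₂ nb₁ nb₂ nc₁ nc₂ : ℕ)
    (Gc₁ : Matrix (Fin n₁) (Fin ng₁) ℝ) (Gb₁ : Matrix (Fin n₁) (Fin nb₁) ℝ)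
    (c₁ : Fin n₁ → ℝ)
    (Ac₁ : Matrix (Fin nc₁) (Fin ng₁) ℝ) (Ab₁ : Matrix (Fin nc₁) (Fin nb₁) ℝ)
    (b₁ : Fin nc₁ → ℝ)
    (Gc₂ : Matrix (Fin n₂) (Fin ng₂) ℝ) (Gb₂ : Matrix (Fin n₂) (Fin nb₂) ℝ)
    (c₂ : Fin n₂ → ℝ)
    (Ac₂ : Matrix (Fin nc₂) (Fin ng₂) ℝ) (Ab₂ : Matrix (Fin nc₂) (Fin nb₂) ℝ)
    (b₂ : Fin nc₂ → ℝ)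
    (h₁ : convexHull ℝ (hybZono Gc₁ Gb₁ c₁ Ac₁ Ab₁ b₁) =
      hybZonoRelax Gc₁ Gb₁ c₁ Ac₁ Ab₁ b₁)
    (h₂ : convexHull ℝ (hybZono Gc₂ Gb₂ c₂ Ac₂ Ab₂ b₂) =
      hybZonoRelax Gc₂ Gb₂ c₂ Ac₂ Ab₂ b₂) :
    convexHull ℝ (hybZono (Matrix.fromBlocks Gc₁ 0 0 Gc₂)
        (Matrix.fromBlocks Gb₁ 0 0 Gb₂) (Sum.elim c₁ c₂)
        (Matrix.fromBlocks Ac₁ 0 0 Ac₂) (Matrix.fromBlocks Ab₁ 0 0 Ab₂)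
        (Sum.elim b₁ b₂)) =
      hybZonoRelax (Matrix.fromBlocks Gc₁ 0 0 Gc₂)
        (Matrix.fromBlocks Gb₁ 0 0 Gb₂) (Sum.elim c₁ c₂)
        (Matrix.fromBlocks Ac₁ 0 0 Ac₂) (Matrix.fromBlocks Ab₁ 0 0 Ab₂)
        (Sum.elim b₁ b₂) := by
  have e₁ : hybZono (Matrix.fromBlocks Gc₁ 0 0 Gc₂)
      (Matrix.fromBlocks Gb₁ 0 0 Gb₂) (Sum.elim c₁ c₂)
      (Matrix.fromBlocks Ac₁ 0 0 Ac₂) (Matrix.fromBlocks Ab₁ 0 0 Ab₂)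
      (Sum.elim b₁ b₂) =
      (elimLM (Fin n₁) (Fin n₂)) ''
        ((hybZono Gc₁ Gb₁ c₁ Ac₁ Ab₁ b₁) ×ˢ (hybZono Gc₂ Gb₂ c₂ Ac₂ Ab₂ b₂)) :=
    block_rep (fun t => t = -1 ∨ t = 1) _ _ _ _ _ _ _ _ _ _ _ _
  have e₂ : hybZonoRelax (Matrix.fromBlocks Gc₁ 0 0 Gc₂)
      (Matrix.fromBlocks Gb₁ 0 0 Gb₂) (Sum.elim c₁ c₂)
      (Matrix.fromBlocks Ac₁ 0 0 Ac₂) (Matrix.fromBlocks Ab₁ 0 0 Ab₂)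
      (Sum.elim b₁ b₂) =
      (elimLM (Fin n₁) (Fin n₂)) ''
        ((hybZonoRelax Gc₁ Gb₁ c₁ Ac₁ Ab₁ b₁) ×ˢ
          (hybZonoRelax Gc₂ Gb₂ c₂ Ac₂ Ab₂ b₂)) :=
    block_rep (fun t => t ∈ Icc (-1 : ℝ) 1) _ _ _ _ _ _ _ _ _ _ _ _
  rw [e₁, e₂, ← (elimLM (Fin n₁) (Fin n₂)).image_convexHull, convexHull_prod,
    h₁, h₂]
end

section
/- The Minkowski sum of two sharp hybrid zonotopes is sharp: if conv(Z₁) = R(Z₁) and conv(Z₂) = R(Z₂), then the standard Minkowski sum hybrid zonotope Z₁ ⊕ Z₂ (concatenating generators and block-diagonal constraints) satisfies conv(Z₁ ⊕ Z₂) = R(Z₁ ⊕ Z₂). -/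
/-!
With block-diagonal constraints the factors of `Z₁ ⊕ Z₂` split into two independent halves, one
for each summand, so the hybrid zonotope `Z₁ ⊕ Z₂` and its convex relaxation are the Minkowski sums
of those of `Z₁` and `Z₂`. Since the convex hull commutes with Minkowski sums,
`conv (Z₁ ⊕ Z₂) = conv Z₁ + conv Z₂ = R(Z₁) + R(Z₂) = R(Z₁ ⊕ Z₂)`.
-/

open Matrix Set

open scoped Pointwise

/-- `hybZono` and `hybZonoRelax` are, definitionally, the cases `S = {-1, 1}` and `S = [-1, 1]`. -/
def hybZonoWith {ι γ β κ : Type*} [Fintype γ] [Fintype β] (S : Set ℝ)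
    (Gc : Matrix ι γ ℝ) (Gb : Matrix ι β ℝ) (c : ι → ℝ)
    (Ac : Matrix κ γ ℝ) (Ab : Matrix κ β ℝ) (b : κ → ℝ) : Set (ι → ℝ) :=
  {x | ∃ (ξc : γ → ℝ) (ξb : β → ℝ),
      (∀ i, ξc i ∈ Icc (-1 : ℝ) 1) ∧ (∀ i, ξb i ∈ S) ∧
      Ac *ᵥ ξc + Ab *ᵥ ξb = b ∧ x = Gc *ᵥ ξc + Gb *ᵥ ξb + c}

theorem Matrix.fromBlocks_zero_zero_mulVec_sumElim {l m n o α : Type*} [Fintype l] [Fintype m]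
    [NonUnitalNonAssocSemiring α] (A : Matrix n l α) (D : Matrix o m α) (x : l → α) (y : m → α) :
    fromBlocks A 0 0 D *ᵥ Sum.elim x y = Sum.elim (A *ᵥ x) (D *ᵥ y) := by
  simp [fromBlocks_mulVec]

section MinkowskiSum

variable {ι γ₁ γ₂ β₁ β₂ κ₁ κ₂ : Type*} [Fintype γ₁] [Fintype γ₂] [Fintype β₁] [Fintype β₂]
  (Gc₁ : Matrix ι γ₁ ℝ) (Gb₁ : Matrix ι β₁ ℝ) (c₁ : ι → ℝ)
  (Ac₁ : Matrix κ₁ γ₁ ℝ) (Ab₁ : Matrix κ₁ β₁ ℝ) (b₁ : κ₁ → ℝ)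
  (Gc₂ : Matrix ι γ₂ ℝ) (Gb₂ : Matrix ι β₂ ℝ) (c₂ : ι → ℝ)
  (Ac₂ : Matrix κ₂ γ₂ ℝ) (Ab₂ : Matrix κ₂ β₂ ℝ) (b₂ : κ₂ → ℝ)

theorem hybZonoWith_fromBlocks (S : Set ℝ) :
    hybZonoWith S (fromCols Gc₁ Gc₂) (fromCols Gb₁ Gb₂) (c₁ + c₂)
        (fromBlocks Ac₁ 0 0 Ac₂) (fromBlocks Ab₁ 0 0 Ab₂) (Sum.elim b₁ b₂) =
      hybZonoWith S Gc₁ Gb₁ c₁ Ac₁ Ab₁ b₁ + hybZonoWith S Gc₂ Gb₂ c₂ Ac₂ Ab₂ b₂ := by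
  refine Subset.antisymm ?_ (add_subset_iff.2 ?_)
  · rintro _ ⟨ξc, ξb, hc, hb, hA, rfl⟩
    obtain ⟨ξc₁, ξc₂, rfl⟩ : ∃ ξ₁ ξ₂, ξc = Sum.elim ξ₁ ξ₂ := ⟨_, _, (Sum.elim_comp_inl_inr ξc).symm⟩
    obtain ⟨ξb₁, ξb₂, rfl⟩ : ∃ ξ₁ ξ₂, ξb = Sum.elim ξ₁ ξ₂ := ⟨_, _, (Sum.elim_comp_inl_inr ξb).symm⟩
    simp only [Sum.forall, Sum.elim_inl, Sum.elim_inr] at hc hb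
    rw [fromBlocks_zero_zero_mulVec_sumElim, fromBlocks_zero_zero_mulVec_sumElim,
      ← Sum.elim_add_add, Sum.elim_eq_iff] at hA
    refine ⟨_, ⟨_, _, hc.1, hb.1, hA.1, rfl⟩, _, ⟨_, _, hc.2, hb.2, hA.2, rfl⟩, ?_⟩
    rw [fromCols_mulVec_sumElim, fromCols_mulVec_sumElim]
    beta_reduce
    abel
  · rintro _ ⟨ξc₁, ξb₁, hc₁, hb₁, hA₁, rfl⟩ _ ⟨ξc₂, ξb₂, hc₂, hb₂, hA₂, rfl⟩
    refine ⟨Sum.elim ξc₁ ξc₂, Sum.elim ξb₁ ξb₂, Sum.forall.2 ⟨hc₁, hc₂⟩, Sum.forall.2 ⟨hb₁, hb₂⟩,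
      ?_, ?_⟩
    · rw [fromBlocks_zero_zero_mulVec_sumElim, fromBlocks_zero_zero_mulVec_sumElim,
        ← Sum.elim_add_add, hA₁, hA₂]
    · rw [fromCols_mulVec_sumElim, fromCols_mulVec_sumElim]
      abel

theorem hybZono_fromBlocks :
    hybZono (fromCols Gc₁ Gc₂) (fromCols Gb₁ Gb₂) (c₁ + c₂)
        (fromBlocks Ac₁ 0 0 Ac₂) (fromBlocks Ab₁ 0 0 Ab₂) (Sum.elim b₁ b₂) =
      hybZono Gc₁ Gb₁ c₁ Ac₁ Ab₁ b₁ + hybZono Gc₂ Gb₂ c₂ Ac₂ Ab₂ b₂ :=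
  hybZonoWith_fromBlocks Gc₁ Gb₁ c₁ Ac₁ Ab₁ b₁ Gc₂ Gb₂ c₂ Ac₂ Ab₂ b₂ {-1, 1}

theorem hybZonoRelax_fromBlocks :
    hybZonoRelax (fromCols Gc₁ Gc₂) (fromCols Gb₁ Gb₂) (c₁ + c₂)
        (fromBlocks Ac₁ 0 0 Ac₂) (fromBlocks Ab₁ 0 0 Ab₂) (Sum.elim b₁ b₂) =
      hybZonoRelax Gc₁ Gb₁ c₁ Ac₁ Ab₁ b₁ + hybZonoRelax Gc₂ Gb₂ c₂ Ac₂ Ab₂ b₂ :=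
  hybZonoWith_fromBlocks Gc₁ Gb₁ c₁ Ac₁ Ab₁ b₁ Gc₂ Gb₂ c₂ Ac₂ Ab₂ b₂ (Icc (-1) 1)

end MinkowskiSum

/-- The standard Minkowski-sum hybrid zonotope (concatenated generators,
summed centers, block-diagonal constraints) of two sharp hybrid zonotopes is
sharp. -/
theorem minkowskiSum_preserves_sharpness
    (n ng₁ ng₂ nb₁ nb₂ nc₁ nc₂ : ℕ)
    (Gc₁ : Matrix (Fin n) (Fin ng₁) ℝ) (Gb₁ : Matrix (Fin n) (Fin nb₁) ℝ)
    (c₁ : Fin n → ℝ)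
    (Ac₁ : Matrix (Fin nc₁) (Fin ng₁) ℝ) (Ab₁ : Matrix (Fin nc₁) (Fin nb₁) ℝ)
    (b₁ : Fin nc₁ → ℝ)
    (Gc₂ : Matrix (Fin n) (Fin ng₂) ℝ) (Gb₂ : Matrix (Fin n) (Fin nb₂) ℝ)
    (c₂ : Fin n → ℝ)
    (Ac₂ : Matrix (Fin nc₂) (Fin ng₂) ℝ) (Ab₂ : Matrix (Fin nc₂) (Fin nb₂) ℝ)
    (b₂ : Fin nc₂ → ℝ)
    (h₁ : convexHull ℝ (hybZono Gc₁ Gb₁ c₁ Ac₁ Ab₁ b₁) =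
      hybZonoRelax Gc₁ Gb₁ c₁ Ac₁ Ab₁ b₁)
    (h₂ : convexHull ℝ (hybZono Gc₂ Gb₂ c₂ Ac₂ Ab₂ b₂) =
      hybZonoRelax Gc₂ Gb₂ c₂ Ac₂ Ab₂ b₂) :
    convexHull ℝ (hybZono (Matrix.fromCols Gc₁ Gc₂)
        (Matrix.fromCols Gb₁ Gb₂) (c₁ + c₂)
        (Matrix.fromBlocks Ac₁ 0 0 Ac₂) (Matrix.fromBlocks Ab₁ 0 0 Ab₂)
        (Sum.elim b₁ b₂)) =
      hybZonoRelax (Matrix.fromCols Gc₁ Gc₂)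
        (Matrix.fromCols Gb₁ Gb₂) (c₁ + c₂)
        (Matrix.fromBlocks Ac₁ 0 0 Ac₂) (Matrix.fromBlocks Ab₁ 0 0 Ab₂)
        (Sum.elim b₁ b₂) := by
  rw [hybZono_fromBlocks, hybZonoRelax_fromBlocks, convexHull_add, h₁, h₂]
end

section
/- The convex relaxation of a generalized intersection of hybrid zonotopes equals the intersection of the relaxations: if X, Z ⊆ ℝⁿ are hybrid zonotopes and X ∩ Z is the standard hybrid zonotope intersection (concatenating factors and adding the constraint that the two affine images agree), then R(X ∩ Z) = R(X) ∩ R(Z). -/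
/-! The relaxation only changes the box the binary factors live in, and the intersection
representation constrains the concatenated factors blockwise: the first rows impose the
constraints of `X` and of `Z` on their own factors, the last rows force the two affine images
to agree. A relaxed factor of the intersection is therefore exactly a pair of relaxed factors of
`X` and of `Z` with a common image. -/

open Matrix Set

theorem exists_sumElim_iff {α β γ : Type*} {p : (α ⊕ β → γ) → Prop} :
    (∃ ξ, p ξ) ↔ ∃ f g, p (Sum.elim f g) :=
  ⟨fun ⟨ξ, h⟩ => ⟨ξ ∘ Sum.inl, ξ ∘ Sum.inr, by rwa [Sum.elim_comp_inl_inr]⟩,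
    fun ⟨_, _, h⟩ => ⟨_, h⟩⟩

theorem intersection_constraints_iff {ι γX γZ βX βZ κX κZ : Type*}
    [Fintype γX] [Fintype γZ] [Fintype βX] [Fintype βZ]
    (GcX : Matrix ι γX ℝ) (GbX : Matrix ι βX ℝ) (cX : ι → ℝ)
    (AcX : Matrix κX γX ℝ) (AbX : Matrix κX βX ℝ) (bX : κX → ℝ)
    (GcZ : Matrix ι γZ ℝ) (GbZ : Matrix ι βZ ℝ) (cZ : ι → ℝ)
    (AcZ : Matrix κZ γZ ℝ) (AbZ : Matrix κZ βZ ℝ) (bZ : κZ → ℝ)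
    (ξcX : γX → ℝ) (ξcZ : γZ → ℝ) (ξbX : βX → ℝ) (ξbZ : βZ → ℝ) :
    fromBlocks (fromRows AcX 0) (fromRows 0 AcZ) GcX (-GcZ) *ᵥ Sum.elim ξcX ξcZ +
        fromBlocks (fromRows AbX 0) (fromRows 0 AbZ) GbX (-GbZ) *ᵥ Sum.elim ξbX ξbZ =
        Sum.elim (Sum.elim bX bZ) (cZ - cX) ↔
      (AcX *ᵥ ξcX + AbX *ᵥ ξbX = bX ∧ AcZ *ᵥ ξcZ + AbZ *ᵥ ξbZ = bZ) ∧
        GcX *ᵥ ξcX + GbX *ᵥ ξbX + cX = GcZ *ᵥ ξcZ + GbZ *ᵥ ξbZ + cZ := by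
  simp only [fromBlocks_mulVec, fromRows_mulVec, Sum.elim_comp_inl, Sum.elim_comp_inr,
    zero_mulVec, add_zero, zero_add, neg_mulVec, ← Sum.elim_add_add, Sum.elim_eq_iff]
  refine and_congr_right fun _ => ⟨fun h => ?_, fun h => ?_⟩ <;> linear_combination h

/-- The convex relaxation of the standard hybrid zonotope intersection
(concatenated factors, block-diagonal constraints, plus the constraint that
the two affine images agree) equals the intersection of the relaxations. -/
theorem relaxation_of_intersection
    (n ngX ngZ nbX nbZ ncX ncZ : ℕ)
    (GcX : Matrix (Fin n) (Fin ngX) ℝ) (GbX : Matrix (Fin n) (Fin nbX) ℝ)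
    (cX : Fin n → ℝ)
    (AcX : Matrix (Fin ncX) (Fin ngX) ℝ) (AbX : Matrix (Fin ncX) (Fin nbX) ℝ)
    (bX : Fin ncX → ℝ)
    (GcZ : Matrix (Fin n) (Fin ngZ) ℝ) (GbZ : Matrix (Fin n) (Fin nbZ) ℝ)
    (cZ : Fin n → ℝ)
    (AcZ : Matrix (Fin ncZ) (Fin ngZ) ℝ) (AbZ : Matrix (Fin ncZ) (Fin nbZ) ℝ)
    (bZ : Fin ncZ → ℝ) :
    hybZonoRelax (Matrix.fromCols GcX 0) (Matrix.fromCols GbX 0) cX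
        (Matrix.fromBlocks (Matrix.fromRows AcX 0) (Matrix.fromRows 0 AcZ)
          GcX (-GcZ))
        (Matrix.fromBlocks (Matrix.fromRows AbX 0) (Matrix.fromRows 0 AbZ)
          GbX (-GbZ))
        (Sum.elim (Sum.elim bX bZ) (cZ - cX)) =
      hybZonoRelax GcX GbX cX AcX AbX bX ∩ hybZonoRelax GcZ GbZ cZ AcZ AbZ bZ := by
  ext x
  simp only [hybZonoRelax, mem_ofPred_eq, mem_inter_iff, exists_sumElim_iff, Sum.forall,
    Sum.elim_inl, Sum.elim_inr, fromCols_mulVec_sumElim, zero_mulVec, add_zero,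
    intersection_constraints_iff]
  constructor
  · rintro ⟨ξcX, ξcZ, ξbX, ξbZ, ⟨hcX, hcZ⟩, ⟨hbX, hbZ⟩, ⟨⟨hAX, hAZ⟩, himage⟩, rfl⟩
    exact ⟨⟨ξcX, ξbX, hcX, hbX, hAX, rfl⟩, ξcZ, ξbZ, hcZ, hbZ, hAZ, himage⟩
  · rintro ⟨⟨ξcX, ξbX, hcX, hbX, hAX, rfl⟩, ξcZ, ξbZ, hcZ, hbZ, hAZ, himage⟩
    exact ⟨ξcX, ξcZ, ξbX, ξbZ, ⟨hcX, hcZ⟩, ⟨hbX, hbZ⟩, ⟨⟨hAX, hAZ⟩, himage⟩, rfl⟩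
end

section
/- Union of a 01-hybrid zonotope with a point: given Z = {Gξ + c : Aξ = b, ξ ∈ ([0,1]^{n_g} × {0,1}^{n_b})} ⊆ ℝⁿ and a point x ∈ ℝⁿ, the set Z' = {Gξ + (c−x)σ + x : Aξ = σb, ξ_i + s_i = σ ∀i, s ∈ [0,1]^{n_g+n_b}, σ ∈ {0,1}, ξ ∈ [0,1]^{n_g} × {0,1}^{n_b}} equals Z ∪ {x}. -/
open Matrix Set

/-- Union of a 01-hybrid zonotope `Z` with a point `x`: the lifted hybrid
zonotope `Z'` with extra slack factors `s` and extra binary factor `σ`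
equals `Z ∪ {x}`. -/
theorem union_01hybridZonotope_point
    (n ng nb nc : ℕ)
    (Gc : Matrix (Fin n) (Fin ng) ℝ) (Gb : Matrix (Fin n) (Fin nb) ℝ)
    (c : Fin n → ℝ)
    (Ac : Matrix (Fin nc) (Fin ng) ℝ) (Ab : Matrix (Fin nc) (Fin nb) ℝ)
    (b : Fin nc → ℝ) (x : Fin n → ℝ)
    (Z : Set (Fin n → ℝ))
    (hZ : Z = {z | ∃ (ξc : Fin ng → ℝ) (ξb : Fin nb → ℝ),
        (∀ i, ξc i ∈ Icc (0 : ℝ) 1) ∧ (∀ i, ξb i = 0 ∨ ξb i = 1) ∧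
        Ac.mulVec ξc + Ab.mulVec ξb = b ∧
        z = Gc.mulVec ξc + Gb.mulVec ξb + c})
    (hne : Z.Nonempty) :
    {z | ∃ (ξc : Fin ng → ℝ) (ξb : Fin nb → ℝ)
        (s : Fin ng ⊕ Fin nb → ℝ) (σ : ℝ),
        (∀ i, ξc i ∈ Icc (0 : ℝ) 1) ∧ (∀ i, ξb i = 0 ∨ ξb i = 1) ∧
        (∀ i, s i ∈ Icc (0 : ℝ) 1) ∧ (σ = 0 ∨ σ = 1) ∧
        Ac.mulVec ξc + Ab.mulVec ξb = σ • b ∧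
        (∀ i, ξc i + s (Sum.inl i) = σ) ∧
        (∀ i, ξb i + s (Sum.inr i) = σ) ∧
        z = Gc.mulVec ξc + Gb.mulVec ξb + σ • (c - x) + x} =
      Z ∪ {x} := by
  ext z
  simp only [mem_setOf_eq, mem_union, mem_singleton_iff, hZ]
  constructor
  · rintro ⟨ξc, ξb, s, σ, hξc, hξb, hs, hσ, hA, hsc, hsb, hz⟩
    rcases hσ with h0 | h1
    · right
      subst h0
      have hc0 : ξc = 0 := by
        funext i
        have := hsc i
        have h1 := (hξc i).1
        have h2 := (hs (Sum.inl i)).1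
        simpa using by linarith
      have hb0 : ξb = 0 := by
        funext i
        have := hsb i
        have h2 := (hs (Sum.inr i)).1
        rcases hξb i with h | h
        · simpa using h
        · exfalso; linarith
      subst hc0; subst hb0
      simp [hz, Matrix.mulVec_zero]
    · left
      subst h1
      refine ⟨ξc, ξb, hξc, hξb, by simpa using hA, ?_⟩
      rw [hz]
      simp
      abel
  · rintro (⟨ξc, ξb, hξc, hξb, hA, hz⟩ | hx)
    · refine ⟨ξc, ξb, Sum.elim (fun i => 1 - ξc i) (fun i => 1 - ξb i), 1,
        hξc, hξb, ?_, Or.inr rfl, by simpa using hA, fun i => by simp,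
        fun i => by simp, ?_⟩
      · rintro (i | i)
        · have := hξc i; constructor <;> simp <;> [linarith [this.2]; linarith [this.1]]
        · rcases hξb i with h | h <;> simp [h]
      · rw [hz]; simp; abel
    · exact ⟨0, 0, 0, 0, by simp, by simp, by simp, Or.inl rfl,
        by simp [Matrix.mulVec_zero], by simp, by simp,
        by simp [hx, Matrix.mulVec_zero]⟩
end

section
/- Disjunctive union via lifting and slicing: given nonempty sets Z₁, …, Z_N ⊆ ℝⁿ, define U_i = (Z_i × {1}) ∪ {0} ⊆ ℝⁿ⁺¹. Then projecting the intersection of the Minkowski sum ⊕_{i=1}^N U_i with the hyperplane {(z, t) : t = 1} onto the first n coordinates yields ⋃_{i=1}^N Z_i. -/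
open Set Pointwise

/-- Disjunctive union via lifting and slicing: projecting the intersection of
the Minkowski sum of the lifted sets `U_i = (Z_i × {1}) ∪ {0}` with the
hyperplane `{t = 1}` onto the first `n` coordinates yields `⋃ i, Z_i`. -/
theorem union_via_lifting_and_slicing
    (n N : ℕ) (Z : Fin N → Set (Fin n → ℝ))
    (hne : ∀ i, (Z i).Nonempty)
    (U : Fin N → Set ((Fin n → ℝ) × ℝ))
    (hU : ∀ i, U i = (Z i ×ˢ ({1} : Set ℝ)) ∪ {0}) :
    Prod.fst '' ((∑ i, U i) ∩ {p : (Fin n → ℝ) × ℝ | p.2 = 1}) =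
      ⋃ i, Z i := by
  classical
  ext x
  simp only [mem_image, mem_inter_iff, mem_setOf_eq, mem_iUnion]
  constructor
  · rintro ⟨p, ⟨hsum, ht⟩, rfl⟩
    rw [Set.mem_fintype_sum] at hsum
    obtain ⟨g, hg, hgsum⟩ := hsum
    have hcase : ∀ i, g i = 0 ∨ g i ∈ Z i ×ˢ ({1} : Set ℝ) := by
      intro i
      have := hg i
      rw [hU i] at this
      rcases this with h | h
      · exact Or.inr h
      · exact Or.inl h
    have hsnd : ∀ i, (g i).2 = 0 ∨ (g i).2 = 1 := by
      intro i
      rcases hcase i with h | h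
      · exact Or.inl (by rw [h]; rfl)
      · exact Or.inr h.2
    have hsumsnd : ∑ i, (g i).2 = 1 := by
      have : (∑ i, g i).2 = p.2 := by rw [hgsum]
      simpa [Prod.snd_sum, ht] using this
    -- find j with (g j).2 = 1
    have hj : ∃ j, (g j).2 = 1 := by
      by_contra h
      push_neg at h
      have : ∀ i, (g i).2 = 0 := fun i => (hsnd i).resolve_right (h i)
      rw [Finset.sum_congr rfl (fun i _ => this i)] at hsumsnd
      simp at hsumsnd
    obtain ⟨j, hj⟩ := hj
    have hzero : ∀ i, i ≠ j → g i = 0 := by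
      intro i hij
      have hrest : ∑ k ∈ Finset.univ.erase j, (g k).2 = 0 := by
        have := Finset.add_sum_erase Finset.univ (fun k => (g k).2)
          (Finset.mem_univ j)
        simp only [hsumsnd, hj] at this
        linarith
      have hnonneg : ∀ k ∈ Finset.univ.erase j, (0:ℝ) ≤ (g k).2 := by
        intro k _
        rcases hsnd k with h | h <;> rw [h] <;> norm_num
      have hi0 : (g i).2 = 0 :=
        (Finset.sum_eq_zero_iff_of_nonneg hnonneg).mp hrest i
          (Finset.mem_erase.mpr ⟨hij, Finset.mem_univ i⟩)
      rcases hcase i with h | h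
      · exact h
      · rw [h.2] at hi0; norm_num at hi0
    have hgj : g j ∈ Z j ×ˢ ({1} : Set ℝ) := by
      rcases hcase j with h | h
      · rw [h] at hj; norm_num at hj
      · exact h
    have hp : p = g j := by
      rw [← hgsum, Finset.sum_eq_single j (fun i _ hij => hzero i hij)
        (fun h => absurd (Finset.mem_univ j) h)]
    exact ⟨j, by rw [hp]; exact hgj.1⟩
  · rintro ⟨j, hxj⟩
    refine ⟨(x, 1), ⟨?_, rfl⟩, rfl⟩
    rw [Set.mem_fintype_sum]
    refine ⟨fun i => if i = j then (x, 1) else 0, fun i => ?_, ?_⟩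
    · rw [hU i]
      by_cases h : i = j
      · subst h; simp [hxj]
      · simp [h]
    · simp [Finset.sum_ite_eq']
end
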